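/- If N and N' are semi-regular networks on the same finite leaf set X whose cluster multisets coincide (𝓜_N = 𝓜_{N'}), then N and N' are isomorphic via a digraph isomorphism fixing every element of X. In particular, every semi-regular network is the unique semi-regular network with its cluster multiset. -/

import Mathlib

namespace PhyloNet

/-- A (rooted) network on a set `X` of taxa: a finite directed acyclic graph with a
unique vertex of indegree 0 (the root), whose vertices of outdegree 0 (the leaves)
are exactly the elements of `X` (via the injection `leafEmb`). -/
structure Network (X : Type) where
  V : Type
  [fintypeV : Fintype V]
  E : V → V → Prop
  leafEmb : X → V
  leafEmb_inj : Function.Injective leafEmb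
  acyclic : ∀ u v : V, E u v → ¬ Relation.ReflTransGen E v u
  root_unique : ∃! r : V, ∀ u : V, ¬ E u r
  leaf_iff : ∀ v : V, (∀ w : V, ¬ E v w) ↔ ∃ x : X, leafEmb x = v

attribute [instance] Network.fintypeV

variable {X : Type}

namespace Network

/-- `reach u v` : there is a directed path (possibly trivial) from `u` to `v`,
i.e. `v ⪯ u`. -/
def reach (N : Network X) : N.V → N.V → Prop := Relation.ReflTransGen N.E

/-- The cluster of a vertex: the set of leaves reachable from it. -/
def cluster (N : Network X) (v : N.V) : Set X := {x | N.reach v (N.leafEmb x)}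

/-- The clustering system of a network. -/
def CS (N : Network X) : Set (Set X) := Set.range N.cluster

noncomputable def inDeg (N : Network X) (v : N.V) : ℕ := {u | N.E u v}.ncard
noncomputable def outDeg (N : Network X) (v : N.V) : ℕ := {w | N.E v w}.ncard

def IsHybrid (N : Network X) (v : N.V) : Prop := 1 < N.inDeg v
def IsTreeVertex (N : Network X) (v : N.V) : Prop := N.inDeg v ≤ 1
def IsLeaf (N : Network X) (v : N.V) : Prop := ∀ w : N.V, ¬ N.E v w

/-- The arc `(u,w)` is a shortcut: `w ≺ v` for some child `v ≠ w` of `u`. -/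
def IsShortcut (N : Network X) (u w : N.V) : Prop :=
  N.E u w ∧ ∃ v : N.V, N.E u v ∧ v ≠ w ∧ N.reach v w

def ShortcutFree (N : Network X) : Prop := ∀ u w : N.V, ¬ N.IsShortcut u w

/-- Path-cluster comparability. -/
def PCC (N : Network X) : Prop :=
  ∀ u v : N.V, (N.reach u v ∨ N.reach v u) ↔
    (N.cluster u ⊆ N.cluster v ∨ N.cluster v ⊆ N.cluster u)

def SemiRegular (N : Network X) : Prop := N.ShortcutFree ∧ N.PCC

/-- `N` is regular iff `v ↦ C(v)` is a digraph isomorphism onto the Hasse diagram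
of `𝒞_N` (ordered by inclusion). -/
def Regular (N : Network X) : Prop :=
  Function.Injective N.cluster ∧
  ∀ u v : N.V, N.E u v ↔
    (N.cluster v ⊂ N.cluster u ∧
      ¬ ∃ w : N.V, N.cluster v ⊂ N.cluster w ∧ N.cluster w ⊂ N.cluster u)

def Separated (N : Network X) : Prop := ∀ v : N.V, N.IsHybrid v → N.outDeg v = 1

def Phylogenetic (N : Network X) : Prop := ¬ ∃ v : N.V, N.outDeg v = 1 ∧ N.inDeg v ≤ 1

def Binary (N : Network X) : Prop :=
  (∀ v : N.V, N.IsTreeVertex v → (N.IsLeaf v ∨ N.outDeg v = 2)) ∧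
  (∀ v : N.V, N.IsHybrid v → N.inDeg v = 2 ∧ N.outDeg v = 1)

def TreeChild (N : Network X) : Prop :=
  ∀ v : N.V, ¬ N.IsLeaf v → ∃ u : N.V, N.E v u ∧ N.inDeg u = 1

/-- The underlying undirected (simple) graph of a network. -/
def UG (N : Network X) : SimpleGraph N.V where
  Adj u v := u ≠ v ∧ (N.E u v ∨ N.E v u)
  symm := ⟨fun _ _ h => ⟨Ne.symm h.1, Or.symm h.2⟩⟩
  loopless := ⟨fun _ h => h.1 rfl⟩

/-- A set of vertices is biconnected if it induces a connected undirected graph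
with no cutvertex. -/
def IsBiconn (N : Network X) (B : Set N.V) : Prop :=
  (N.UG.induce B).Connected ∧ ∀ v ∈ B, (N.UG.induce (B \ {v})).Preconnected

/-- A block: a maximal biconnected set of vertices. -/
def IsBlock (N : Network X) (B : Set N.V) : Prop :=
  N.IsBiconn B ∧ ∀ B' : Set N.V, B ⊆ B' → N.IsBiconn B' → B' = B

/-- The set `B` contains an undirected cycle (`B` is a non-trivial block when it is
a block). -/
def HasCycleIn (N : Network X) (B : Set N.V) : Prop :=
  ∃ (v : N.V) (c : N.UG.Walk v v), c.IsCycle ∧ ∀ w ∈ c.support, w ∈ B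

/-- Level-1: each block contains at most one hybrid vertex that is not
`⪯`-maximal in the block. -/
def Level1 (N : Network X) : Prop :=
  ∀ B : Set N.V, N.IsBlock B →
    Set.Subsingleton {v : N.V | v ∈ B ∧ N.IsHybrid v ∧ ∃ u ∈ B, u ≠ v ∧ N.reach u v}

/-- The set `B` (with the edges of the underlying undirected graph between its
members) is exactly an undirected cycle. -/
def IsCycleSet (N : Network X) (B : Set N.V) : Prop :=
  ∃ (v : N.V) (c : N.UG.Walk v v), c.IsCycle ∧ (∀ w : N.V, w ∈ c.support ↔ w ∈ B) ∧
    ∀ u w : N.V, (N.UG.Adj u w ∧ u ∈ B ∧ w ∈ B) ↔ s(u, w) ∈ c.edges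

/-- A galled tree: every non-trivial block is an undirected cycle. -/
def GalledTree (N : Network X) : Prop :=
  ∀ B : Set N.V, N.IsBlock B → N.HasCycleIn B → N.IsCycleSet B

/-- Quasi-binary: hybrid vertices have indegree 2 and outdegree 1, and the
`⪯`-maximal vertex of every non-trivial block has outdegree 2. -/
def QuasiBinary (N : Network X) : Prop :=
  (∀ v : N.V, N.IsHybrid v → N.inDeg v = 2 ∧ N.outDeg v = 1) ∧
  ∀ B : Set N.V, N.IsBlock B → N.HasCycleIn B →
    ∀ v ∈ B, (∀ u ∈ B, N.reach u v → u = v) → N.outDeg v = 2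

/-- `LCA A`: the `⪯`-minimal vertices among the common ancestors of `A`. -/
def LCA (N : Network X) (A : Set X) : Set N.V :=
  {v : N.V | A ⊆ N.cluster v ∧ ∀ u : N.V, A ⊆ N.cluster u → N.reach v u → u = v}

/-- An lca-network: every nonempty set of leaves has a unique least common
ancestor. -/
def LcaNetwork (N : Network X) : Prop :=
  ∀ A : Set X, A.Nonempty → ∃ v : N.V, N.LCA A = {v}

/-- A strong lca-network. -/
def StrongLca (N : Network X) : Prop :=
  N.LcaNetwork ∧
  ∀ A : Set X, A.Nonempty → ∃ x ∈ A, ∃ y ∈ A, N.LCA ({x, y} : Set X) = N.LCA A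

/-- Cluster networks in the sense of Huson & Rupp. -/
def ClusterNetwork (N : Network X) : Prop :=
  N.PCC ∧
  (∀ u v : N.V, N.cluster u = N.cluster v ↔
    (u = v ∨ (N.IsHybrid v ∧ N.E v u) ∨ (N.IsHybrid u ∧ N.E u v))) ∧
  (∀ u v : N.V, N.E v u →
    ¬ ∃ w : N.V, N.cluster u ⊂ N.cluster w ∧ N.cluster w ⊂ N.cluster v) ∧
  (∀ v : N.V, N.IsHybrid v →
    ∃ u : N.V, N.E v u ∧ (∀ w : N.V, N.E v w → w = u) ∧ N.IsTreeVertex u)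

/-- The multiplicity of a cluster in the cluster multiset `𝓜_N`. -/
noncomputable def multiplicity (N : Network X) (C : Set X) : ℕ :=
  Nat.card {v : N.V // N.cluster v = C}

/-- Isomorphism of networks on the same leaf set `X`, fixing every leaf. -/
def Isomorphic (N N' : Network X) : Prop :=
  ∃ φ : N.V ≃ N'.V, (∀ u v : N.V, N.E u v ↔ N'.E (φ u) (φ v)) ∧
    ∀ x : X, φ (N.leafEmb x) = N'.leafEmb x

end Network

/-- A clustering system on `X`. -/
def IsClusteringSystem {X : Type} (𝒞 : Set (Set X)) : Prop :=
  ∅ ∉ 𝒞 ∧ Set.univ ∈ 𝒞 ∧ ∀ x : X, {x} ∈ 𝒞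

/-- Two sets overlap if `A ∩ B ∉ {∅, A, B}`. -/
def Overlap {X : Type} (A B : Set X) : Prop :=
  (A ∩ B).Nonempty ∧ A ∩ B ≠ A ∧ A ∩ B ≠ B

/-- Closed (under pairwise nonempty intersections). -/
def IsClosedCS {X : Type} (𝒞 : Set (Set X)) : Prop :=
  ∀ A ∈ 𝒞, ∀ B ∈ 𝒞, (A ∩ B).Nonempty → A ∩ B ∈ 𝒞

/-- Property (L). -/
def PropertyL {X : Type} (𝒞 : Set (Set X)) : Prop :=
  ∀ C₁ ∈ 𝒞, ∀ C₂ ∈ 𝒞, ∀ C₃ ∈ 𝒞, Overlap C₁ C₂ → Overlap C₁ C₃ → C₁ ∩ C₂ = C₁ ∩ C₃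

/-- Weak hierarchy. -/
def WeakHierarchy {X : Type} (𝒞 : Set (Set X)) : Prop :=
  ∀ C₁ ∈ 𝒞, ∀ C₂ ∈ 𝒞, ∀ C₃ ∈ 𝒞,
    C₁ ∩ C₂ ∩ C₃ = C₁ ∩ C₂ ∨ C₁ ∩ C₂ ∩ C₃ = C₁ ∩ C₃ ∨
    C₁ ∩ C₂ ∩ C₃ = C₂ ∩ C₃ ∨ C₁ ∩ C₂ ∩ C₃ = ∅

/-- Property (N3O): no three distinct pairwise overlapping clusters. -/
def N3O {X : Type} (𝒞 : Set (Set X)) : Prop :=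
  ¬ ∃ C₁ ∈ 𝒞, ∃ C₂ ∈ 𝒞, ∃ C₃ ∈ 𝒞,
    C₁ ≠ C₂ ∧ C₁ ≠ C₃ ∧ C₂ ≠ C₃ ∧ Overlap C₁ C₂ ∧ Overlap C₁ C₃ ∧ Overlap C₂ C₃

/-- Property (2-Inc). -/
def TwoInc {X : Type} (𝒞 : Set (Set X)) : Prop :=
  ∀ C ∈ 𝒞,
    {A : Set X | A ∈ 𝒞 ∧ A ⊂ C ∧ ∀ B ∈ 𝒞, B ⊂ C → A ⊆ B → A = B}.ncard ≤ 2 ∧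
    {A : Set X | A ∈ 𝒞 ∧ C ⊂ A ∧ ∀ B ∈ 𝒞, C ⊂ B → B ⊆ A → A = B}.ncard ≤ 2

/-- The intersection closure: all nonempty intersections of nonempty subfamilies. -/
def interClosure {X : Type} (𝒞 : Set (Set X)) : Set (Set X) :=
  {A : Set X | A.Nonempty ∧ ∃ S : Set (Set X), S ⊆ 𝒞 ∧ S.Nonempty ∧ A = ⋂₀ S}

/-!
By (PCC), the vertices sharing a cluster `C` form a chain under `⪯`, so numbering each chain from
the bottom gives every vertex a label `(C(v), k)` with `1 ≤ k ≤ mult(C)`, and these labels are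
exactly the pairs with this property. Ordered lexicographically, the labels reproduce `⪯`.
Hence the cluster multiset alone determines `⪯` up to a leaf-fixing relabelling, and in a
shortcut-free network the arcs are exactly the covering pairs of `⪯`.
-/

namespace Network

open Relation

variable (N : Network X)

lemma reach_antisymm {u v : N.V} (huv : N.reach u v) (hvu : N.reach v u) : u = v := by
  rcases huv.cases_head with rfl | ⟨w, huw, hwv⟩
  · rfl
  · exact absurd (hwv.trans hvu) (N.acyclic u w huw)

lemma ne_of_E {u v : N.V} (h : N.E u v) : u ≠ v := by
  rintro rfl
  exact N.acyclic u u h ReflTransGen.refl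

lemma cluster_subset_of_reach {u v : N.V} (h : N.reach u v) : N.cluster v ⊆ N.cluster u :=
  fun _ hx => h.trans hx

lemma eq_of_reach_leafEmb {x : X} {v : N.V} (h : N.reach (N.leafEmb x) v) : v = N.leafEmb x := by
  rcases h.cases_head with rfl | ⟨w, hw, -⟩
  · rfl
  · exact absurd hw ((N.leaf_iff _).mpr ⟨x, rfl⟩ w)

lemma cluster_leafEmb (x : X) : N.cluster (N.leafEmb x) = {x} := by
  ext y
  exact ⟨fun h => N.leafEmb_inj (N.eq_of_reach_leafEmb h), fun h => h ▸ ReflTransGen.refl⟩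

lemma E_iff_of_shortcutFree (hS : N.ShortcutFree) (u v : N.V) :
    N.E u v ↔ N.reach u v ∧ u ≠ v ∧ ∀ w, N.reach u w → N.reach w v → w = u ∨ w = v := by
  constructor
  · intro huv
    refine ⟨ReflTransGen.single huv, N.ne_of_E huv, fun w huw hwv => ?_⟩
    rcases huw.cases_head with rfl | ⟨c, huc, hcw⟩
    · exact Or.inl rfl
    · by_cases hcv : c = v
      · subst hcv
        exact Or.inr (N.reach_antisymm hwv hcw)
      · exact absurd ⟨huv, c, huc, hcv, hcw.trans hwv⟩ (hS u v)
  · rintro ⟨huv, hne, hcover⟩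
    rcases huv.cases_head with rfl | ⟨c, huc, hcv⟩
    · exact absurd rfl hne
    · rcases hcover c (ReflTransGen.single huc) hcv with rfl | rfl
      · exact absurd rfl (N.ne_of_E huc)
      · exact huc

noncomputable def rank (v : N.V) : ℕ :=
  {u | N.cluster u = N.cluster v ∧ N.reach v u}.ncard

lemma one_le_rank (v : N.V) : 1 ≤ N.rank v :=
  (Set.ncard_pos (Set.toFinite _)).mpr ⟨v, rfl, ReflTransGen.refl⟩

lemma multiplicity_eq_ncard (C : Set X) : N.multiplicity C = {v | N.cluster v = C}.ncard :=
  Nat.card_coe_set_eq _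

lemma rank_le_multiplicity (v : N.V) : N.rank v ≤ N.multiplicity (N.cluster v) := by
  rw [multiplicity_eq_ncard]
  exact Set.ncard_le_ncard (fun _ hu => hu.1) (Set.toFinite _)

lemma rank_leafEmb (x : X) : N.rank (N.leafEmb x) = 1 := by
  have : {u | N.cluster u = N.cluster (N.leafEmb x) ∧ N.reach (N.leafEmb x) u} =
      {N.leafEmb x} :=
    Set.eq_singleton_iff_unique_mem.mpr
      ⟨⟨rfl, ReflTransGen.refl⟩, fun _ hu => N.eq_of_reach_leafEmb hu.2⟩
  rw [rank, this, Set.ncard_singleton]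

lemma rank_le_rank_of_reach {u v : N.V} (hc : N.cluster v = N.cluster u) (h : N.reach u v) :
    N.rank v ≤ N.rank u :=
  Set.ncard_le_ncard (fun _ hw => ⟨hw.1.trans hc, h.trans hw.2⟩) (Set.toFinite _)

lemma rank_lt_rank_of_reach {u v : N.V} (hc : N.cluster v = N.cluster u) (h : N.reach u v)
    (hne : u ≠ v) : N.rank v < N.rank u := by
  refine Set.ncard_lt_ncard ⟨fun _ hw => ⟨hw.1.trans hc, h.trans hw.2⟩, fun hsub => ?_⟩
    (Set.toFinite _)
  exact hne (N.reach_antisymm h (hsub ⟨rfl, ReflTransGen.refl⟩).2)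

noncomputable def key (v : N.V) : Set X ×ₗ ℕ := toLex (N.cluster v, N.rank v)

variable {N}

lemma reach_iff_key_le (hP : N.PCC) (u v : N.V) : N.reach u v ↔ N.key v ≤ N.key u := by
  rw [key, key, Prod.Lex.toLex_le_toLex]
  constructor
  · intro h
    by_cases hc : N.cluster v = N.cluster u
    · exact Or.inr ⟨hc, N.rank_le_rank_of_reach hc h⟩
    · exact Or.inl ((N.cluster_subset_of_reach h).ssubset_of_ne hc)
  · rintro (hlt | ⟨hc, hle⟩)
    · refine ((hP u v).mpr (Or.inr hlt.subset)).resolve_right fun h => ?_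
      exact hlt.not_subset (N.cluster_subset_of_reach h)
    · rcases (hP u v).mpr (Or.inr hc.subset) with h | h
      · exact h
      · by_cases huv : u = v
        · exact huv ▸ ReflTransGen.refl
        · exact absurd hle (N.rank_lt_rank_of_reach hc.symm h (Ne.symm huv)).not_ge

lemma key_injective (hP : N.PCC) : Function.Injective N.key := fun u v h =>
  N.reach_antisymm ((reach_iff_key_le hP u v).mpr h.ge) ((reach_iff_key_le hP v u).mpr h.le)

lemma exists_rank_eq (hP : N.PCC) {C : Set X} {k : ℕ} (hk : 1 ≤ k)
    (hkC : k ≤ N.multiplicity C) : ∃ v, N.cluster v = C ∧ N.rank v = k := by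
  let f : {v // N.cluster v = C} → Finset.Icc 1 (N.multiplicity C) := fun v =>
    ⟨N.rank v, Finset.mem_Icc.mpr ⟨N.one_le_rank v, (N.rank_le_multiplicity v).trans_eq (congrArg _ v.2)⟩⟩
  have hf : Function.Injective f := fun v w h => Subtype.ext <| key_injective hP <| by
    simp only [key, v.2, w.2, show N.rank v = N.rank w from congrArg Subtype.val h]
  have hcard : Nat.card (Finset.Icc 1 (N.multiplicity C)) ≤ Nat.card {v // N.cluster v = C} := by
    rw [Nat.card_eq_fintype_card, Fintype.card_coe, Nat.card_Icc, Nat.add_sub_cancel]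
    rfl
  obtain ⟨v, hv⟩ := (hf.bijective_of_nat_card_le hcard).2 ⟨k, Finset.mem_Icc.mpr ⟨hk, hkC⟩⟩
  exact ⟨v, v.2, congrArg Subtype.val hv⟩

lemma range_key (hP : N.PCC) :
    Set.range N.key = {p | 1 ≤ (ofLex p).2 ∧ (ofLex p).2 ≤ N.multiplicity (ofLex p).1} := by
  ext p
  constructor
  · rintro ⟨v, rfl⟩
    exact ⟨N.one_le_rank v, N.rank_le_multiplicity v⟩
  · rintro ⟨hk, hkC⟩
    obtain ⟨v, hC, hk⟩ := exists_rank_eq hP hk hkC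
    exact ⟨v, by rw [key, hC, hk, toLex_ofLex]⟩

lemma exists_equiv_key_eq {N' : Network X} (hP : N.PCC) (hP' : N'.PCC)
    (hM : ∀ C, N.multiplicity C = N'.multiplicity C) :
    ∃ F : N.V ≃ N'.V, ∀ v, N'.key (F v) = N.key v := by
  have hrange : Set.range N.key = Set.range N'.key := by
    simp only [range_key hP, range_key hP', hM]
  refine ⟨(Equiv.ofInjective _ (key_injective hP)).trans
    ((Equiv.setCongr hrange).trans (Equiv.ofInjective _ (key_injective hP')).symm), fun v => ?_⟩
  simp only [Equiv.trans_apply, Equiv.apply_ofInjective_symm, Equiv.setCongr_apply,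
    Equiv.ofInjective_apply]

lemma isomorphic_of_reach_iff {N' : Network X} (hS : N.ShortcutFree) (hS' : N'.ShortcutFree)
    (F : N.V ≃ N'.V) (hreach : ∀ u v, N.reach u v ↔ N'.reach (F u) (F v))
    (hleaf : ∀ x, F (N.leafEmb x) = N'.leafEmb x) : N.Isomorphic N' := by
  refine ⟨F, fun u v => ?_, hleaf⟩
  rw [N.E_iff_of_shortcutFree hS, N'.E_iff_of_shortcutFree hS', ← F.forall_congr_right]
  simp only [hreach, F.injective.ne_iff, F.injective.eq_iff]

end Network

theorem semiRegular_encoded_by_cluster_multiset_general (X : Type)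
    (N N' : Network X) (hN : N.SemiRegular) (hN' : N'.SemiRegular)
    (hM : ∀ C : Set X, N.multiplicity C = N'.multiplicity C) :
    N.Isomorphic N' := by
  obtain ⟨hS, hP⟩ := hN
  obtain ⟨hS', hP'⟩ := hN'
  obtain ⟨F, hF⟩ := Network.exists_equiv_key_eq hP hP' hM
  refine Network.isomorphic_of_reach_iff hS hS' F (fun u v => ?_) (fun x => ?_)
  · rw [Network.reach_iff_key_le hP, Network.reach_iff_key_le hP', hF, hF]
  · refine Network.key_injective hP' ?_
    rw [hF, Network.key, Network.key, Network.cluster_leafEmb, Network.cluster_leafEmb,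
      Network.rank_leafEmb, Network.rank_leafEmb]

/-- Semi-regular networks with the same cluster multiset are
isomorphic (via an isomorphism fixing every leaf); i.e., semi-regular networks
are encoded by their cluster multisets. -/
theorem semiRegular_encoded_by_cluster_multiset (X : Type) [Fintype X]
    (N N' : Network X) (hN : N.SemiRegular) (hN' : N'.SemiRegular)
    (hM : ∀ C : Set X, N.multiplicity C = N'.multiplicity C) :
    N.Isomorphic N' :=
  semiRegular_encoded_by_cluster_multiset_general X N N' hN hN' hM

end PhyloNet
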